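/- arXiv:1812.00802 — 5 statements merged into one kernel-verified Lean document; each statement's English description precedes it below -/
import Mathlib

section
/- Let N_u ≤ N_RF ≤ N_r, let λ > 0, and let H ∈ ℂ^{N_r×N_u} satisfy H^H H = λ·I_{N_u}. Let W₁ ∈ ℂ^{N_r×N_RF} have orthonormal columns such that its first N_u columns form an orthonormal basis of the column space of H, and let W₂ ∈ ℂ^{N_RF×N_RF} be any unitary matrix all of whose entries have modulus 1/√N_RF. Then C(W₁W₂) = N_u · log₂( 1 + αλN_RF / (λ N_u (1−α) + N_RF/ρ) ). -/
open Matrix BigOperators Filter Topology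

/-- The quantized mutual information `C(W)` for channel `H`, combiner `W`,
SNR `ρ` and quantization gain `α` (with `β = 1 - α`):
`C(W) = log₂ det( I + (α/β)·(diag{WᴴHHᴴW} + (1/(βρ))I)⁻¹ · WᴴHHᴴW )`. -/
noncomputable def MI (ρ α : ℝ) {Nr Nu NRF : ℕ} (H : Matrix (Fin Nr) (Fin Nu) ℂ)
    (W : Matrix (Fin Nr) (Fin NRF) ℂ) : ℝ :=
  let A : Matrix (Fin NRF) (Fin NRF) ℂ := Wᴴ * H * Hᴴ * W
  let M : Matrix (Fin NRF) (Fin NRF) ℂ :=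
    1 + ((α / (1 - α) : ℝ) : ℂ) •
      ((Matrix.diagonal A.diag + ((1 / ((1 - α) * ρ) : ℝ) : ℂ) • 1)⁻¹ * A)
  Real.logb 2 M.det.re

/-!
Let `V` consist of the first `Nu` columns of `W₁`. Since the columns of `H` lie in the range of the
isometry `V`, we have `H = V C` with `C = Vᴴ H` square and `Cᴴ C = Hᴴ H = λ I`, hence `C Cᴴ = λ I`.
For `W = W₁ W₂` this gives `Wᴴ H Hᴴ W = λ Xᴴ X`, where `X = Vᴴ W` is the block of the first `Nu`
rows of `W₂`: it has orthonormal rows and entries of squared modulus `1 / NRF`. So the diagonal of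
`Wᴴ H Hᴴ W` is the constant `λ Nu / NRF`, the normalising matrix in `C(W)` is scalar, and
Sylvester's identity `det (1 + t Xᴴ X) = det (1 + t X Xᴴ) = (1 + t) ^ Nu` finishes the computation.
-/

namespace Matrix

theorem mul_conjTranspose_mul_eq_of_range_le {m n p R : Type*} [Fintype m] [Fintype n]
    [Fintype p] [DecidableEq n] [CommRing R] [StarRing R] {V : Matrix m n R} {H : Matrix m p R}
    (hV : Vᴴ * V = 1) (hHV : LinearMap.range H.mulVecLin ≤ LinearMap.range V.mulVecLin) :
    V * (Vᴴ * H) = H := by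
  refine ext_iff_mulVec.2 fun x => ?_
  obtain ⟨y, hy⟩ := hHV ⟨x, rfl⟩
  change V *ᵥ y = H *ᵥ x at hy
  rw [← mulVec_mulVec, ← mulVec_mulVec, ← hy, mulVec_mulVec y Vᴴ, hV, one_mulVec]

theorem mul_conjTranspose_eq_smul_one {n R : Type*} [Fintype n] [DecidableEq n] [Field R]
    [StarRing R] {C : Matrix n n R} {c : R} (hc : c ≠ 0) (hC : Cᴴ * C = c • 1) :
    C * Cᴴ = c • 1 := by
  have hinv : C * (c⁻¹ • Cᴴ) = 1 :=
    mul_eq_one_comm.1 (by rw [smul_mul, hC, smul_smul, inv_mul_cancel₀ hc, one_smul])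
  rw [Matrix.mul_smul] at hinv
  rw [← hinv, smul_inv_smul₀ hc]

theorem diag_conjTranspose_mul_self_of_norm_sq_eq {m n 𝕜 : Type*} [Fintype m] [RCLike 𝕜]
    {X : Matrix m n 𝕜} {c : ℝ} (hX : ∀ i j, ‖X i j‖ ^ 2 = c) :
    (Xᴴ * X).diag = fun _ => ((Fintype.card m * c : ℝ) : 𝕜) := by
  funext j
  simp only [diag_apply, mul_apply, conjTranspose_apply, RCLike.star_def, RCLike.conj_mul,
    ← RCLike.ofReal_pow, hX]
  simp

theorem det_one_add_smul_conjTranspose_mul_self {m n R : Type*} [Fintype m] [Fintype n]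
    [DecidableEq m] [DecidableEq n] [CommRing R] [StarRing R] {X : Matrix m n R}
    (hX : X * Xᴴ = 1) (c : R) :
    (1 + c • (Xᴴ * X)).det = (1 + c) ^ Fintype.card m := by
  rw [← smul_mul, det_one_add_mul_comm, Matrix.mul_smul, hX, ← one_smul R (1 : Matrix m m R),
    smul_smul, mul_one, ← add_smul, det_smul, det_one, mul_one]

end Matrix

theorem MI_eq_logb_det_of_diag_eq (ρ α : ℝ) {Nr Nu NRF : ℕ} (H : Matrix (Fin Nr) (Fin Nu) ℂ)
    (W : Matrix (Fin Nr) (Fin NRF) ℂ) {a : ℝ}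
    (hdiag : (Wᴴ * H * Hᴴ * W).diag = fun _ => (a : ℂ)) (ha : a + 1 / ((1 - α) * ρ) ≠ 0) :
    MI ρ α H W = Real.logb 2
      (1 + ((α / (1 - α) / (a + 1 / ((1 - α) * ρ)) : ℝ) : ℂ) • (Wᴴ * H * Hᴴ * W)).det.re := by
  have hinv : (diagonal (fun _ => (a : ℂ)) + ((1 / ((1 - α) * ρ) : ℝ) : ℂ) • 1)⁻¹ =
      (((a + 1 / ((1 - α) * ρ))⁻¹ : ℝ) : ℂ) • (1 : Matrix (Fin NRF) (Fin NRF) ℂ) := by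
    refine inv_eq_right_inv ?_
    rw [← smul_one_eq_diagonal, ← add_smul, smul_mul_smul, mul_one, ← Complex.ofReal_add,
      ← Complex.ofReal_mul, mul_inv_cancel₀ ha, Complex.ofReal_one, one_smul]
  simp only [MI]
  rw [hdiag, hinv, smul_mul, one_mul, smul_smul, ← Complex.ofReal_mul, ← div_eq_mul_inv]

theorem stmt1_general (ρ α : ℝ) (hρ : 0 < ρ) (hα : α ∈ Set.Ioo (0 : ℝ) 1)
    (Nu NRF Nr : ℕ) (h1 : Nu ≤ NRF)
    (lam : ℝ) (hlam : 0 < lam)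
    (H : Matrix (Fin Nr) (Fin Nu) ℂ)
    (hH : Hᴴ * H = (lam : ℂ) • 1)
    (W₁ : Matrix (Fin Nr) (Fin NRF) ℂ)
    (hW₁ : W₁ᴴ * W₁ = 1)
    (hspan : Submodule.span ℂ (Set.range fun k : Fin Nu => W₁ᵀ (Fin.castLE h1 k)) =
      LinearMap.range H.mulVecLin)
    (W₂ : Matrix (Fin NRF) (Fin NRF) ℂ)
    (hW₂ : W₂ ∈ Matrix.unitaryGroup (Fin NRF) ℂ)
    (hmod : ∀ i j, ‖W₂ i j‖ = 1 / Real.sqrt NRF) :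
    MI ρ α H (W₁ * W₂) =
      Nu * Real.logb 2 (1 + α * lam * NRF / (lam * Nu * (1 - α) + NRF / ρ)) := by
  obtain ⟨-, hα1⟩ := hα
  set V := W₁.submatrix id (Fin.castLE h1)
  have hV : Vᴴ * V = 1 := by
    change (W₁ᴴ * W₁).submatrix (Fin.castLE h1) (Fin.castLE h1) = 1
    rw [hW₁, submatrix_one _ (Fin.castLE_injective h1)]
  have hHV : V * (Vᴴ * H) = H := by
    refine mul_conjTranspose_mul_eq_of_range_le hV ?_
    rw [← hspan, range_mulVecLin]
    rfl
  have hC : (Vᴴ * H) * (Vᴴ * H)ᴴ = (lam : ℂ) • 1 := by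
    refine mul_conjTranspose_eq_smul_one (by exact_mod_cast hlam.ne') ?_
    rw [conjTranspose_mul, conjTranspose_conjTranspose, Matrix.mul_assoc, hHV, hH]
  set X := W₂.submatrix (Fin.castLE h1) id
  have hVW : Vᴴ * (W₁ * W₂) = X := by
    change (W₁ᴴ * (W₁ * W₂)).submatrix (Fin.castLE h1) id = X
    rw [← Matrix.mul_assoc, hW₁, Matrix.one_mul]
  have hX : X * Xᴴ = 1 := by
    change (W₂ * star W₂).submatrix (Fin.castLE h1) (Fin.castLE h1) = 1
    rw [mem_unitaryGroup_iff.1 hW₂, submatrix_one _ (Fin.castLE_injective h1)]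
  have hXnorm : ∀ i j, ‖X i j‖ ^ 2 = 1 / NRF := fun i j => by
    change ‖W₂ (Fin.castLE h1 i) j‖ ^ 2 = _
    rw [hmod, div_pow, one_pow, Real.sq_sqrt (Nat.cast_nonneg _)]
  have hA : (W₁ * W₂)ᴴ * H * Hᴴ * (W₁ * W₂) = (lam : ℂ) • (Xᴴ * X) := by
    calc (W₁ * W₂)ᴴ * H * Hᴴ * (W₁ * W₂)
        = (Vᴴ * (W₁ * W₂))ᴴ * ((Vᴴ * H) * (Vᴴ * H)ᴴ) * (Vᴴ * (W₁ * W₂)) := by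
          conv_lhs => rw [← hHV]
          simp only [conjTranspose_mul, conjTranspose_conjTranspose, Matrix.mul_assoc]
      _ = (lam : ℂ) • (Xᴴ * X) := by
          rw [hC, hVW, Matrix.mul_smul, Matrix.mul_one, smul_mul]
  have hdiag : ((W₁ * W₂)ᴴ * H * Hᴴ * (W₁ * W₂)).diag =
      fun _ => ((lam * (Nu * (1 / NRF)) : ℝ) : ℂ) := by
    rw [hA, diag_smul, diag_conjTranspose_mul_self_of_norm_sq_eq hXnorm, Fintype.card_fin]
    funext
    simp
  have hpos : 0 < lam * (Nu * (1 / NRF)) + 1 / ((1 - α) * ρ) :=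
    add_pos_of_nonneg_of_pos (by positivity) (one_div_pos.2 (mul_pos (by linarith) hρ))
  rw [MI_eq_logb_det_of_diag_eq ρ α H (W₁ * W₂) hdiag hpos.ne', hA, smul_smul,
    ← Complex.ofReal_mul, det_one_add_smul_conjTranspose_mul_self hX, Fintype.card_fin,
    ← Complex.ofReal_one, ← Complex.ofReal_add, ← Complex.ofReal_pow, Complex.ofReal_re,
    Real.logb_pow]
  -- for `Nu = 0` we may have `NRF = 0`, where the two arguments of `logb` differ
  rcases Nat.eq_zero_or_pos Nu with hNu | hNu
  · simp [hNu]
  have hNRF : (0 : ℝ) < NRF := by exact_mod_cast hNu.trans_le h1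
  congr 3
  field_simp

theorem stmt1 (ρ α : ℝ) (hρ : 0 < ρ) (hα : α ∈ Set.Ioo (0 : ℝ) 1)
    (Nu NRF Nr : ℕ) (h1 : Nu ≤ NRF) (h2 : NRF ≤ Nr)
    (lam : ℝ) (hlam : 0 < lam)
    (H : Matrix (Fin Nr) (Fin Nu) ℂ)
    (hH : Hᴴ * H = (lam : ℂ) • 1)
    (W₁ : Matrix (Fin Nr) (Fin NRF) ℂ)
    (hW₁ : W₁ᴴ * W₁ = 1)
    (hspan : Submodule.span ℂ (Set.range fun k : Fin Nu => W₁ᵀ (Fin.castLE h1 k)) =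
      LinearMap.range H.mulVecLin)
    (W₂ : Matrix (Fin NRF) (Fin NRF) ℂ)
    (hW₂ : W₂ ∈ Matrix.unitaryGroup (Fin NRF) ℂ)
    (hmod : ∀ i j, ‖W₂ i j‖ = 1 / Real.sqrt NRF) :
    MI ρ α H (W₁ * W₂) =
      Nu * Real.logb 2 (1 + α * lam * NRF / (lam * Nu * (1 - α) + NRF / ρ)) :=
  stmt1_general ρ α hρ hα Nu NRF Nr h1 lam hlam H hH W₁ hW₁ hspan W₂ hW₂ hmod
end

section
/- Let N_u ≤ N_RF ≤ N_r and H ∈ ℂ^{N_r×N_u}. Let λ₁ ≥ ⋯ ≥ λ_{N_u} ≥ 0 be the eigenvalues of H^H H, with orthonormal vectors u₁,…,u_{N_u} ∈ ℂ^{N_r} satisfying H H^H u_k = λ_k u_k. Let W_cv ∈ ℂ^{N_r×N_RF} have orthonormal columns whose first N_u columns are u₁,…,u_{N_u}. Then C(W_cv) = Σ_{i=1}^{N_u} log₂( 1 + α λ_i / ((1−α) λ_i + 1/ρ) ). -/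
open Matrix BigOperators Filter Topology

lemma trace_conj_re {m n : ℕ} (X : Matrix (Fin m) (Fin n) ℂ) :
    (Matrix.trace (Xᴴ * X)).re = ∑ j, ∑ i, Complex.normSq (X i j) := by
  simp only [Matrix.trace, Matrix.diag, Matrix.mul_apply, Matrix.conjTranspose_apply,
    Complex.re_sum]
  refine Finset.sum_congr rfl fun j _ => Finset.sum_congr rfl fun i _ => ?_
  rw [Complex.star_def, ← Complex.normSq_eq_conj_mul_self, Complex.ofReal_re]

lemma diag_conj_re {m n : ℕ} (X : Matrix (Fin m) (Fin n) ℂ) (k : Fin n) :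
    ((Xᴴ * X) k k).re = ∑ i, Complex.normSq (X i k) := by
  simp only [Matrix.mul_apply, Matrix.conjTranspose_apply, Complex.re_sum]
  refine Finset.sum_congr rfl fun i _ => ?_
  rw [Complex.star_def, ← Complex.normSq_eq_conj_mul_self, Complex.ofReal_re]

lemma key_diag (Nu NRF Nr : ℕ) (h1 : Nu ≤ NRF)
    (H : Matrix (Fin Nr) (Fin Nu) ℂ)
    (lam : Fin Nu → ℝ)
    (v : Fin Nu → Fin Nu → ℂ)
    (hv_on : ∀ k l, star (v k) ⬝ᵥ v l = if k = l then 1 else 0)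
    (hv_eig : ∀ k, (Hᴴ * H) *ᵥ v k = (lam k : ℂ) • v k)
    (u : Fin Nu → Fin Nr → ℂ)
    (hu_eig : ∀ k, (H * Hᴴ) *ᵥ u k = (lam k : ℂ) • u k)
    (Wcv : Matrix (Fin Nr) (Fin NRF) ℂ)
    (hWcv : Wcvᴴ * Wcv = 1)
    (hcols : ∀ (k : Fin Nu) (i : Fin Nr), Wcv i (Fin.castLE h1 k) = u k i) :
    Wcvᴴ * H * Hᴴ * Wcv =
      Matrix.diagonal (fun k : Fin NRF =>
        ((if h : (k : ℕ) < Nu then lam ⟨k, h⟩ else 0 : ℝ) : ℂ)) := by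
  set Y : Matrix (Fin Nu) (Fin NRF) ℂ := Hᴴ * Wcv with hY
  have hYc : Yᴴ = Wcvᴴ * H := by
    rw [hY, Matrix.conjTranspose_mul, Matrix.conjTranspose_conjTranspose]
  have hA : Wcvᴴ * H * Hᴴ * Wcv = Yᴴ * Y := by
    rw [hYc, hY]; simp only [Matrix.mul_assoc]
  -- columns of (H*Hᴴ)*Wcv indexed by castLE i
  have hBW : ∀ (i : Fin Nu) (m : Fin Nr),
      (H * Hᴴ * Wcv) m (Fin.castLE h1 i) = (lam i : ℂ) * Wcv m (Fin.castLE h1 i) := by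
    intro i m
    have h := congrFun (hu_eig i) m
    simp only [Matrix.mulVec, dotProduct, Pi.smul_apply, smul_eq_mul] at h
    rw [Matrix.mul_apply]
    simp only [hcols]
    exact h
  -- A columns for castLE i
  have hAcol : ∀ (i : Fin Nu) (j : Fin NRF),
      (Yᴴ * Y) j (Fin.castLE h1 i)
        = (lam i : ℂ) * (1 : Matrix (Fin NRF) (Fin NRF) ℂ) j (Fin.castLE h1 i) := by
    intro i j
    have hy : Yᴴ * Y = Wcvᴴ * (H * Hᴴ * Wcv) := by
      rw [hYc, hY]; simp only [Matrix.mul_assoc]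
    rw [hy, ← hWcv]
    rw [Matrix.mul_apply, Matrix.mul_apply, Finset.mul_sum]
    refine Finset.sum_congr rfl fun m _ => ?_
    rw [hBW]; ring
  -- orthonormal basis matrix V
  set V : Matrix (Fin Nu) (Fin Nu) ℂ := Matrix.of (fun i k => v k i) with hVdef
  have hVV : Vᴴ * V = 1 := by
    ext k l
    have h := hv_on k l
    simp only [dotProduct, Pi.star_apply] at h
    simp only [Matrix.mul_apply, Matrix.conjTranspose_apply, hVdef, Matrix.of_apply,
      Matrix.one_apply]
    exact h
  have hVV2 : V * Vᴴ = 1 := mul_eq_one_comm.mp hVV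
  have hHHV : (Hᴴ * H) * V = V * Matrix.diagonal (fun k => (lam k : ℂ)) := by
    ext i k
    have h := congrFun (hv_eig k) i
    simp only [Matrix.mulVec, dotProduct, Pi.smul_apply, smul_eq_mul] at h
    rw [Matrix.mul_apply, Matrix.mul_apply]
    simp only [hVdef, Matrix.of_apply, Matrix.diagonal_apply, mul_ite, mul_zero,
      Finset.sum_ite_eq', Finset.mem_univ, if_true]
    rw [mul_comm]
    exact h
  have e1 : Matrix.trace (Hᴴ * H) = ∑ k, (lam k : ℂ) := by
    calc Matrix.trace (Hᴴ * H)
        = Matrix.trace ((Hᴴ * H) * (V * Vᴴ)) := by rw [hVV2, mul_one]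
      _ = Matrix.trace (((Hᴴ * H) * V) * Vᴴ) := by rw [mul_assoc]
      _ = Matrix.trace (Vᴴ * ((Hᴴ * H) * V)) := Matrix.trace_mul_comm _ _
      _ = Matrix.trace ((Vᴴ * V) * Matrix.diagonal (fun k => (lam k : ℂ))) := by
          rw [hHHV, mul_assoc]
      _ = ∑ k, (lam k : ℂ) := by rw [hVV, one_mul, Matrix.trace_diagonal]
  set B : Matrix (Fin Nr) (Fin Nr) ℂ := H * Hᴴ with hBdef
  have e2 : Matrix.trace B = ∑ k, (lam k : ℂ) := by
    rw [hBdef, Matrix.trace_mul_comm, e1]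
  set P : Matrix (Fin Nr) (Fin Nr) ℂ := Wcv * Wcvᴴ with hPdef
  have hPP : P * P = P := by
    rw [hPdef, Matrix.mul_assoc, ← Matrix.mul_assoc Wcvᴴ Wcv Wcvᴴ, hWcv, Matrix.one_mul]
  have hPH : Pᴴ = P := by
    rw [hPdef, Matrix.conjTranspose_mul, Matrix.conjTranspose_conjTranspose]
  set Q : Matrix (Fin Nr) (Fin Nr) ℂ := 1 - P with hQdef
  have hQQ : Q * Q = Q := by
    rw [hQdef, sub_mul, one_mul, mul_sub, mul_one, hPP]
    abel
  have hQH : Qᴴ = Q := by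
    rw [hQdef, Matrix.conjTranspose_sub, Matrix.conjTranspose_one, hPH]
  have e3 : Matrix.trace B = Matrix.trace (B * P) + Matrix.trace (B * Q) := by
    rw [← Matrix.trace_add, ← mul_add, hQdef, add_sub_cancel, mul_one]
  have e4 : Matrix.trace (B * P) = Matrix.trace (Yᴴ * Y) := by
    have h : B * P = ((H * Hᴴ) * Wcv) * Wcvᴴ := by
      rw [hBdef, hPdef, ← Matrix.mul_assoc]
    rw [h, Matrix.trace_mul_comm, hYc, hY]
    congr 1
    simp only [Matrix.mul_assoc]
  set Z : Matrix (Fin Nu) (Fin Nr) ℂ := Hᴴ * Q with hZdef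
  have e5 : Matrix.trace (B * Q) = Matrix.trace (Zᴴ * Z) := by
    have h : Zᴴ * Z = Q * (B * Q) := by
      rw [hZdef, Matrix.conjTranspose_mul, Matrix.conjTranspose_conjTranspose, hQH, hBdef]
      simp only [Matrix.mul_assoc]
    rw [h, Matrix.trace_mul_comm Q (B * Q), Matrix.mul_assoc B Q Q, hQQ]
  -- real bookkeeping
  set S : Fin NRF → ℝ := fun k => ∑ i, Complex.normSq (Y i k) with hSdef
  have htr : (∑ k, lam k) = (∑ k, S k) + ∑ j, ∑ i, Complex.normSq (Z i j) := by
    have h := congrArg Complex.re (e2.symm.trans (e3.trans (by rw [e4, e5])))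
    rw [Complex.re_sum] at h
    simp only [Complex.ofReal_re] at h
    rw [Complex.add_re, trace_conj_re, trace_conj_re] at h
    exact h
  have hScol : ∀ i : Fin Nu, S (Fin.castLE h1 i) = lam i := by
    intro i
    have h := congrArg Complex.re (hAcol i (Fin.castLE h1 i))
    rw [diag_conj_re] at h
    rw [Matrix.one_apply_eq, mul_one, Complex.ofReal_re] at h
    exact h
  -- split the sum over columns
  have hsplit : (∑ k, S k)
      = (∑ i : Fin Nu, lam i) + ∑ k ∈ (Finset.univ.map (Fin.castLEEmb h1))ᶜ, S k := by
    rw [← Finset.sum_add_sum_compl (Finset.univ.map (Fin.castLEEmb h1)) S]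
    congr 1
    rw [Finset.sum_map]
    exact Finset.sum_congr rfl fun i _ => hScol i
  have hnn1 : ∀ k, 0 ≤ S k := fun k => Finset.sum_nonneg fun i _ => Complex.normSq_nonneg _
  have hnn2 : 0 ≤ ∑ j, ∑ i, Complex.normSq (Z i j) :=
    Finset.sum_nonneg fun j _ => Finset.sum_nonneg fun i _ => Complex.normSq_nonneg _
  have hcompl0 : ∑ k ∈ (Finset.univ.map (Fin.castLEEmb h1))ᶜ, S k = 0 := by
    have h0 : 0 ≤ ∑ k ∈ (Finset.univ.map (Fin.castLEEmb h1))ᶜ, S k :=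
      Finset.sum_nonneg fun k _ => hnn1 k
    rw [hsplit] at htr
    linarith
  have hzero : ∀ k ∈ (Finset.univ.map (Fin.castLEEmb h1))ᶜ, S k = 0 :=
    (Finset.sum_eq_zero_iff_of_nonneg (fun k _ => hnn1 k)).mp hcompl0
  have hYzero : ∀ k : Fin NRF, ¬((k : ℕ) < Nu) → ∀ i, Y i k = 0 := by
    intro k hk i
    have hkmem : k ∈ (Finset.univ.map (Fin.castLEEmb h1))ᶜ := by
      simp only [Finset.mem_compl, Finset.mem_map, Finset.mem_univ, true_and, not_exists]
      intro i' hi'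
      apply hk
      rw [← hi']
      exact i'.isLt
    have hS0 := hzero k hkmem
    have := (Finset.sum_eq_zero_iff_of_nonneg
      (fun i _ => Complex.normSq_nonneg (Y i k))).mp hS0 i (Finset.mem_univ i)
    exact Complex.normSq_eq_zero.mp this
  -- final assembly
  rw [hA]
  ext j k
  by_cases hk : (k : ℕ) < Nu
  · have hkk : k = Fin.castLE h1 ⟨(k : ℕ), hk⟩ := by ext; rfl
    rw [hkk, hAcol ⟨(k : ℕ), hk⟩ j, ← hkk]
    rw [Matrix.one_apply, Matrix.diagonal_apply]
    by_cases hjk : j = k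
    · subst hjk
      rw [if_pos rfl, if_pos rfl, mul_one, dif_pos hk]
    · rw [if_neg hjk, if_neg hjk, mul_zero]
  · rw [Matrix.mul_apply]
    have hterm : ∀ x ∈ (Finset.univ : Finset (Fin Nu)), Yᴴ j x * Y x k = (0 : ℂ) := by
      intro x _
      rw [hYzero k hk x, mul_zero]
    rw [Finset.sum_congr rfl hterm, Finset.sum_const_zero, Matrix.diagonal_apply]
    by_cases hjk : j = k
    · rw [if_pos hjk, hjk, dif_neg hk, Complex.ofReal_zero]
    · rw [if_neg hjk]

theorem stmt4 (ρ α : ℝ) (hρ : 0 < ρ) (hα : α ∈ Set.Ioo (0 : ℝ) 1)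
    (Nu NRF Nr : ℕ) (h1 : Nu ≤ NRF) (h2 : NRF ≤ Nr)
    (H : Matrix (Fin Nr) (Fin Nu) ℂ)
    -- the ordered eigenvalues λ₁ ≥ ⋯ ≥ λ_{Nu} ≥ 0 of HᴴH,
    -- witnessed by an orthonormal eigenbasis v of HᴴH
    (lam : Fin Nu → ℝ) (hanti : Antitone lam) (hnn : ∀ k, 0 ≤ lam k)
    (v : Fin Nu → Fin Nu → ℂ)
    (hv_on : ∀ k l, star (v k) ⬝ᵥ v l = if k = l then 1 else 0)
    (hv_eig : ∀ k, (Hᴴ * H) *ᵥ v k = (lam k : ℂ) • v k)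
    -- orthonormal vectors u with H Hᴴ u_k = λ_k u_k
    (u : Fin Nu → Fin Nr → ℂ)
    (hu_on : ∀ k l, star (u k) ⬝ᵥ u l = if k = l then 1 else 0)
    (hu_eig : ∀ k, (H * Hᴴ) *ᵥ u k = (lam k : ℂ) • u k)
    -- W_cv has orthonormal columns, the first Nu of which are u₁,…,u_{Nu}
    (Wcv : Matrix (Fin Nr) (Fin NRF) ℂ)
    (hWcv : Wcvᴴ * Wcv = 1)
    (hcols : ∀ (k : Fin Nu) (i : Fin Nr), Wcv i (Fin.castLE h1 k) = u k i) :
    MI ρ α H Wcv =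
      ∑ i, Real.logb 2 (1 + α * lam i / ((1 - α) * lam i + 1 / ρ)) := by
  obtain ⟨hα0, hα1⟩ := hα
  have hβ : (0 : ℝ) < 1 - α := by linarith
  have hkey := key_diag Nu NRF Nr h1 H lam v hv_on hv_eig u hu_eig Wcv hWcv hcols
  set d : Fin NRF → ℝ := fun k => if h : (k : ℕ) < Nu then lam ⟨(k : ℕ), h⟩ else 0 with hd
  have hdnn : ∀ k, 0 ≤ d k := by
    intro k
    rw [hd]
    dsimp only
    split_ifs with h
    · exact hnn _
    · exact le_refl 0
  set c : ℝ := 1 / ((1 - α) * ρ) with hc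
  have hcpos : 0 < c := div_pos one_pos (mul_pos hβ hρ)
  set f : Fin NRF → ℝ := fun k => 1 + (α / (1 - α)) * ((d k + c)⁻¹ * d k) with hf
  have hfpos : ∀ k, 0 < f k := by
    intro k
    have h1' : 0 < d k + c := by linarith [hdnn k]
    have : 0 ≤ (α / (1 - α)) * ((d k + c)⁻¹ * d k) :=
      mul_nonneg (div_nonneg hα0.le hβ.le)
        (mul_nonneg (inv_nonneg.mpr h1'.le) (hdnn k))
    rw [hf]; dsimp only; linarith
  -- the matrix M is diagonal with entries f
  have hM : (1 : Matrix (Fin NRF) (Fin NRF) ℂ) + ((α / (1 - α) : ℝ) : ℂ) •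
      ((Matrix.diagonal (Matrix.diagonal (fun k => ((d k : ℝ) : ℂ))).diag
        + ((c : ℝ) : ℂ) • 1)⁻¹ * Matrix.diagonal (fun k => ((d k : ℝ) : ℂ)))
      = Matrix.diagonal (fun k => ((f k : ℝ) : ℂ)) := by
    rw [Matrix.diag_diagonal]
    have h_add : Matrix.diagonal (fun k => ((d k : ℝ) : ℂ)) +
        ((c : ℝ) : ℂ) • (1 : Matrix (Fin NRF) (Fin NRF) ℂ)
        = Matrix.diagonal (fun k => ((d k + c : ℝ) : ℂ)) := by
      rw [← Matrix.diagonal_one, ← Matrix.diagonal_smul, Matrix.diagonal_add]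
      congr 1
      funext k
      simp only [Pi.smul_apply, smul_eq_mul, mul_one]
      push_cast
      ring
    rw [h_add]
    have hne : ∀ k, ((d k + c : ℝ) : ℂ) ≠ 0 := fun k =>
      Complex.ofReal_ne_zero.mpr (ne_of_gt (by linarith [hdnn k, hcpos]))
    have h_inv : (Matrix.diagonal (fun k => ((d k + c : ℝ) : ℂ)))⁻¹
        = Matrix.diagonal (fun k => (((d k + c : ℝ) : ℂ))⁻¹) := by
      apply Matrix.inv_eq_right_inv
      rw [Matrix.diagonal_mul_diagonal]
      rw [show (fun k => ((d k + c : ℝ) : ℂ) * (((d k + c : ℝ) : ℂ))⁻¹)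
          = fun _ : Fin NRF => (1 : ℂ) from funext fun k => mul_inv_cancel₀ (hne k)]
      exact Matrix.diagonal_one
    rw [h_inv, Matrix.diagonal_mul_diagonal, ← Matrix.diagonal_smul,
      ← Matrix.diagonal_one, Matrix.diagonal_add]
    congr 1
    funext k
    simp only [Pi.smul_apply, smul_eq_mul]
    rw [hf]
    push_cast
    ring
  -- unfold MI and rewrite
  have hMI : MI ρ α H Wcv
      = Real.logb 2 (Matrix.diagonal (fun k => ((f k : ℝ) : ℂ))).det.re := by
    simp only [MI]
    rw [← hc, hkey, hM]
  rw [hMI, Matrix.det_diagonal, ← Complex.ofReal_prod, Complex.ofReal_re]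
  rw [Real.logb_prod Finset.univ f (fun k _ => ne_of_gt (hfpos k))]
  rw [← Finset.sum_add_sum_compl (Finset.univ.map (Fin.castLEEmb h1))
    (fun k => Real.logb 2 (f k))]
  have hcompl : ∑ k ∈ (Finset.univ.map (Fin.castLEEmb h1))ᶜ, Real.logb 2 (f k) = 0 := by
    apply Finset.sum_eq_zero
    intro k hk
    have hknot : ¬ ((k : ℕ) < Nu) := by
      simp only [Finset.mem_compl, Finset.mem_map, Finset.mem_univ, true_and,
        not_exists] at hk
      intro hlt
      exact hk ⟨(k : ℕ), hlt⟩ (by ext; rfl)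
    have hd0 : d k = 0 := by rw [hd]; exact dif_neg hknot
    have hf1 : f k = 1 := by rw [hf]; dsimp only; rw [hd0]; simp
    rw [hf1, Real.logb_one]
  rw [hcompl, add_zero, Finset.sum_map]
  apply Finset.sum_congr rfl
  intro i _
  have hdc : d ((Fin.castLEEmb h1) i) = lam i := by
    rw [hd]
    dsimp only
    rw [dif_pos (show (((Fin.castLEEmb h1) i : Fin NRF) : ℕ) < Nu from i.isLt)]
    exact congrArg lam (Fin.ext rfl)
  congr 1
  rw [hf]
  dsimp only
  rw [hdc, hc]
  have hd1 : (0 : ℝ) < lam i + 1 / ((1 - α) * ρ) := by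
    have h0 : (0 : ℝ) < 1 / ((1 - α) * ρ) := by positivity
    linarith [hnn i]
  have hd2 : (0 : ℝ) < (1 - α) * lam i + 1 / ρ := by
    have h0 : (0 : ℝ) < 1 / ρ := by positivity
    have h1' : (0 : ℝ) ≤ (1 - α) * lam i := mul_nonneg hβ.le (hnn i)
    linarith
  have hkey2 : (lam i + 1 / ((1 - α) * ρ)) * (1 - α) = (1 - α) * lam i + 1 / ρ := by
    field_simp
  have e : α / (1 - α) * ((lam i + 1 / ((1 - α) * ρ))⁻¹ * lam i)
      = α * lam i / ((lam i + 1 / ((1 - α) * ρ)) * (1 - α)) := by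
    generalize lam i + 1 / ((1 - α) * ρ) = X
    rw [div_eq_mul_inv, div_eq_mul_inv, mul_inv]
    ring
  rw [e, hkey2]
end

section
/- Let N_u ≤ N_RF ≤ N_r and H ∈ ℂ^{N_r×N_u}. Let λ₁ ≥ ⋯ ≥ λ_{N_u} ≥ 0 be the eigenvalues of H^H H, with orthonormal vectors u₁,…,u_{N_u} ∈ ℂ^{N_r} satisfying H H^H u_k = λ_k u_k, and let W_cv ∈ ℂ^{N_r×N_RF} have orthonormal columns whose first N_u columns are u₁,…,u_{N_u}. Then the mutual information of the conventional combiner is strictly bounded, uniformly in the channel: C(W_cv) < N_u · log₂( 1 + α/(1−α) ). -/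
open Matrix BigOperators Filter Topology

lemma trace_conjT_mul_self {m n : ℕ} (B : Matrix (Fin m) (Fin n) ℂ) :
    Matrix.trace (Bᴴ * B) = ((∑ j, ∑ i, Complex.normSq (B i j) : ℝ) : ℂ) := by
  rw [Matrix.trace]
  push_cast
  refine Finset.sum_congr rfl fun j _ => ?_
  rw [Matrix.diag_apply, Matrix.mul_apply]
  push_cast
  refine Finset.sum_congr rfl fun i _ => ?_
  rw [Matrix.conjTranspose_apply]
  simp [Complex.normSq_eq_conj_mul_self]

theorem stmt5 (ρ α : ℝ) (hρ : 0 < ρ) (hα : α ∈ Set.Ioo (0 : ℝ) 1)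
    (Nu NRF Nr : ℕ) (hNu : 1 ≤ Nu) (h1 : Nu ≤ NRF) (h2 : NRF ≤ Nr)
    (H : Matrix (Fin Nr) (Fin Nu) ℂ)
    -- the ordered eigenvalues λ₁ ≥ ⋯ ≥ λ_{Nu} ≥ 0 of HᴴH,
    -- witnessed by an orthonormal eigenbasis v of HᴴH
    (lam : Fin Nu → ℝ) (hanti : Antitone lam) (hnn : ∀ k, 0 ≤ lam k)
    (v : Fin Nu → Fin Nu → ℂ)
    (hv_on : ∀ k l, star (v k) ⬝ᵥ v l = if k = l then 1 else 0)
    (hv_eig : ∀ k, (Hᴴ * H) *ᵥ v k = (lam k : ℂ) • v k)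
    -- orthonormal vectors u with H Hᴴ u_k = λ_k u_k
    (u : Fin Nu → Fin Nr → ℂ)
    (hu_on : ∀ k l, star (u k) ⬝ᵥ u l = if k = l then 1 else 0)
    (hu_eig : ∀ k, (H * Hᴴ) *ᵥ u k = (lam k : ℂ) • u k)
    -- W_cv has orthonormal columns, the first Nu of which are u₁,…,u_{Nu}
    (Wcv : Matrix (Fin Nr) (Fin NRF) ℂ)
    (hWcv : Wcvᴴ * Wcv = 1)
    (hcols : ∀ (k : Fin Nu) (i : Fin Nr), Wcv i (Fin.castLE h1 k) = u k i) :
    MI ρ α H Wcv < Nu * Real.logb 2 (1 + α / (1 - α)) := by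
  obtain ⟨hα0, hα1⟩ := hα
  have hβ : (0:ℝ) < 1 - α := by linarith
  set t : ℝ := α / (1 - α) with ht
  have ht0 : 0 < t := div_pos hα0 hβ
  set c : ℝ := 1 / ((1 - α) * ρ) with hc
  have hc0 : 0 < c := by rw [hc]; positivity
  set L : Matrix (Fin Nu) (Fin NRF) ℂ := Hᴴ * Wcv with hL
  set A : Matrix (Fin NRF) (Fin NRF) ℂ := Wcvᴴ * H * Hᴴ * Wcv with hA
  have hALL : A = Lᴴ * L := by
    simp [hA, hL, Matrix.conjTranspose_mul, Matrix.mul_assoc]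
  -- column facts
  have hGW : ∀ (k : Fin Nu) (i : Fin Nr),
      (H * Hᴴ * Wcv) i (Fin.castLE h1 k) = (lam k : ℂ) * u k i := by
    intro k i
    have h0 : (H * Hᴴ * Wcv) i (Fin.castLE h1 k) = ((H * Hᴴ) *ᵥ u k) i := by
      simp [Matrix.mul_apply, Matrix.mulVec, dotProduct, hcols]
    rw [h0, hu_eig k]
    simp
  have hAcol : ∀ (j : Fin NRF) (k : Fin Nu),
      A j (Fin.castLE h1 k) = (lam k : ℂ) * (if j = Fin.castLE h1 k then 1 else 0) := by
    intro j k
    have h0 : A j (Fin.castLE h1 k) = (Wcvᴴ * (H * Hᴴ * Wcv)) j (Fin.castLE h1 k) := by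
      simp [hA, Matrix.mul_assoc]
    rw [h0, Matrix.mul_apply]
    have h1' : ∀ i, (Wcvᴴ) j i * (H * Hᴴ * Wcv) i (Fin.castLE h1 k)
        = (lam k : ℂ) * ((Wcvᴴ) j i * Wcv i (Fin.castLE h1 k)) := by
      intro i; rw [hGW k i, hcols k i]; ring
    rw [Finset.sum_congr rfl fun i _ => h1' i, ← Finset.mul_sum, ← Matrix.mul_apply, hWcv,
      Matrix.one_apply]
  -- diagonal entries of A as sums of squares
  set r : Fin NRF → ℝ := fun j => ∑ i, Complex.normSq (L i j) with hr
  have hrnn : ∀ j, 0 ≤ r j := fun j =>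
    Finset.sum_nonneg fun i _ => Complex.normSq_nonneg _
  have hdiagL : ∀ j : Fin NRF, A j j = ((r j : ℝ) : ℂ) := by
    intro j
    rw [hALL, Matrix.mul_apply, hr]
    push_cast
    refine Finset.sum_congr rfl fun i _ => ?_
    rw [Matrix.conjTranspose_apply]
    simp [Complex.normSq_eq_conj_mul_self]
  -- trace of H*Hᴴ equals the sum of eigenvalues
  set V : Matrix (Fin Nu) (Fin Nu) ℂ := Matrix.of (fun i k => v k i) with hV
  have hVV : Vᴴ * V = 1 := by
    ext k l
    have h := hv_on k l
    simpa [Matrix.mul_apply, Matrix.conjTranspose_apply, Matrix.one_apply, hV,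
      dotProduct] using h
  have hVV' : V * Vᴴ = 1 := mul_eq_one_comm.mp hVV
  have hHHV : (Hᴴ * H) * V = V * Matrix.diagonal (fun k => (lam k : ℂ)) := by
    ext i k
    have h0 : ((Hᴴ * H) * V) i k = ((Hᴴ * H) *ᵥ v k) i := by
      simp [Matrix.mul_apply, Matrix.mulVec, dotProduct, hV]
    rw [h0, hv_eig k]
    simp [Matrix.mul_diagonal, hV, mul_comm]
  have htrG : Matrix.trace (H * Hᴴ) = ((∑ k, lam k : ℝ) : ℂ) := by
    rw [Matrix.trace_mul_comm]
    have hfac : Hᴴ * H = V * Matrix.diagonal (fun k => (lam k : ℂ)) * Vᴴ := by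
      rw [← hHHV, Matrix.mul_assoc, hVV', Matrix.mul_one]
    rw [hfac, Matrix.trace_mul_cycle, hVV, Matrix.one_mul,
      Matrix.trace_diagonal]
    push_cast
    rfl
  -- the projector complement
  set P : Matrix (Fin Nr) (Fin Nr) ℂ := Wcv * Wcvᴴ with hP
  have hPP : P * P = P := by
    rw [hP, Matrix.mul_assoc, ← Matrix.mul_assoc Wcvᴴ Wcv Wcvᴴ, hWcv, Matrix.one_mul]
  have hPH : (1 - P)ᴴ = 1 - P := by
    simp [hP, Matrix.conjTranspose_mul]
  set K : Matrix (Fin Nu) (Fin Nr) ℂ := Hᴴ * (1 - P) with hK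
  have hKK : Kᴴ * K = (1 - P) * (H * Hᴴ) * (1 - P) := by
    simp [hK, Matrix.conjTranspose_mul, hPH, Matrix.mul_assoc]
  have hProj : (1 - P) * (1 - P) = 1 - P := by
    rw [sub_mul, one_mul, mul_sub, mul_one, hPP]
    abel
  have htotal : Matrix.trace A + Matrix.trace (Kᴴ * K) = Matrix.trace (H * Hᴴ) := by
    have e1 : Matrix.trace A = Matrix.trace (P * (H * Hᴴ)) := by
      rw [hA, Matrix.trace_mul_comm _ Wcv, hP]
      congr 1
      simp [Matrix.mul_assoc]
    have e2 : Matrix.trace (Kᴴ * K) = Matrix.trace (H * Hᴴ) - Matrix.trace (P * (H * Hᴴ)) := by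
      rw [hKK, Matrix.trace_mul_comm _ (1 - P), ← Matrix.mul_assoc, hProj, sub_mul, one_mul,
        Matrix.trace_sub]
    rw [e1, e2]
    ring
  have htrA : Matrix.trace A = ((∑ j, r j : ℝ) : ℂ) := by
    rw [Matrix.trace]
    push_cast
    exact Finset.sum_congr rfl fun j _ => hdiagL j
  -- sum of r over all columns is at most the sum of eigenvalues
  have hrsum_le : ∑ j, r j ≤ ∑ k, lam k := by
    have hKtr := trace_conjT_mul_self K
    have hreal : ((∑ j, r j : ℝ) : ℂ) + ((∑ j, ∑ i, Complex.normSq (K i j) : ℝ) : ℂ)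
        = ((∑ k, lam k : ℝ) : ℂ) := by
      rw [← htrA, ← hKtr, htotal, htrG]
    have : (∑ j, r j) + (∑ j, ∑ i, Complex.normSq (K i j)) = ∑ k, lam k := by
      exact_mod_cast hreal
    have hKnn : 0 ≤ ∑ j, ∑ i, Complex.normSq (K i j) :=
      Finset.sum_nonneg fun j _ => Finset.sum_nonneg fun i _ => Complex.normSq_nonneg _
    linarith
  -- r at the first Nu columns
  have hrlam : ∀ k : Fin Nu, r (Fin.castLE h1 k) = lam k := by
    intro k
    have h := hAcol (Fin.castLE h1 k) k
    rw [if_pos rfl, mul_one, hdiagL] at h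
    exact_mod_cast h
  -- the set of first Nu indices
  set s : Finset (Fin NRF) :=
    Finset.univ.map ⟨Fin.castLE h1, Fin.castLE_injective h1⟩ with hs
  have hmem : ∀ j : Fin NRF, j ∈ s ↔ (j : ℕ) < Nu := by
    intro j
    simp only [hs, Finset.mem_map, Finset.mem_univ, true_and, Function.Embedding.coeFn_mk]
    constructor
    · rintro ⟨a, rfl⟩; exact a.isLt
    · intro h; exact ⟨⟨(j : ℕ), h⟩, Fin.ext rfl⟩
  have hscard : s.card = Nu := by simp [hs]
  have hsum_s : ∑ j ∈ s, r j = ∑ k, lam k := by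
    rw [hs, Finset.sum_map]
    exact Finset.sum_congr rfl fun k _ => hrlam k
  have hrout : ∀ j : Fin NRF, j ∉ s → r j = 0 := by
    have hsplit : ∑ j ∈ Finset.univ \ s, r j + ∑ j ∈ s, r j = ∑ j, r j :=
      Finset.sum_sdiff (Finset.subset_univ s)
    have hle : ∑ j ∈ Finset.univ \ s, r j ≤ 0 := by
      have := hrsum_le
      rw [← hsplit, hsum_s] at this
      linarith
    have hzero : ∑ j ∈ Finset.univ \ s, r j = 0 :=
      le_antisymm hle (Finset.sum_nonneg fun j _ => hrnn j)
    intro j hj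
    exact (Finset.sum_eq_zero_iff_of_nonneg fun i _ => hrnn i).mp hzero j
      (Finset.mem_sdiff.mpr ⟨Finset.mem_univ j, hj⟩)
  have hLcol : ∀ j : Fin NRF, r j = 0 → ∀ i, L i j = 0 := by
    intro j hj i
    have h := (Finset.sum_eq_zero_iff_of_nonneg
      (fun i _ => Complex.normSq_nonneg (L i j))).mp hj i (Finset.mem_univ i)
    exact Complex.normSq_eq_zero.mp h
  have hzeroA : ∀ (j k : Fin NRF), r k = 0 → A j k = 0 := by
    intro j k hk
    rw [hALL, Matrix.mul_apply]
    refine Finset.sum_eq_zero fun i _ => ?_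
    rw [hLcol k hk i, mul_zero]
  -- A is diagonal
  set dr : Fin NRF → ℝ := fun j => if h : (j : ℕ) < Nu then lam ⟨(j : ℕ), h⟩ else 0 with hdr
  have hdrnn : ∀ j, 0 ≤ dr j := by
    intro j
    rw [hdr]
    by_cases h : (j : ℕ) < Nu
    · simpa [h] using hnn ⟨(j : ℕ), h⟩
    · simp [h]
  have hAdiagonal : A = Matrix.diagonal (fun j => ((dr j : ℝ) : ℂ)) := by
    ext j k
    by_cases hjk : j = k
    · subst hjk
      rw [Matrix.diagonal_apply_eq]
      by_cases hj : (j : ℕ) < Nu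
      · have hcast : Fin.castLE h1 ⟨(j : ℕ), hj⟩ = j := Fin.ext rfl
        have h := hAcol j ⟨(j : ℕ), hj⟩
        rw [hcast, if_pos rfl, mul_one] at h
        rw [h, hdr]
        simp [hj]
      · have hout : r j = 0 := hrout j (by rw [hmem]; exact hj)
        rw [hzeroA j j hout, hdr]
        simp [hj]
    · rw [Matrix.diagonal_apply_ne _ hjk]
      by_cases hk : (k : ℕ) < Nu
      · have hcast : Fin.castLE h1 ⟨(k : ℕ), hk⟩ = k := Fin.ext rfl
        have h := hAcol j ⟨(k : ℕ), hk⟩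
        rw [hcast, if_neg hjk, mul_zero] at h
        exact h
      · exact hzeroA j k (hrout k (by rw [hmem]; exact hk))
  -- compute the determinant
  set f : Fin NRF → ℝ := fun j => 1 + t * ((dr j + c)⁻¹ * dr j) with hf
  have hwpos : ∀ j : Fin NRF, (0:ℝ) < dr j + c := fun j => by have := hdrnn j; linarith
  have hinv : (Matrix.diagonal (fun j : Fin NRF => ((dr j : ℝ) : ℂ) + ((c : ℝ) : ℂ)))⁻¹
      = Matrix.diagonal (fun j : Fin NRF => (((dr j + c : ℝ) : ℂ))⁻¹) := by
    refine Matrix.inv_eq_right_inv ?_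
    rw [Matrix.diagonal_mul_diagonal, ← Matrix.diagonal_one]
    refine congrArg Matrix.diagonal (funext fun j => ?_)
    have hne : ((dr j : ℝ) : ℂ) + ((c : ℝ) : ℂ) ≠ 0 := by
      have h0 : ((dr j + c : ℝ) : ℂ) ≠ 0 := Complex.ofReal_ne_zero.mpr (hwpos j).ne'
      push_cast at h0
      exact h0

    push_cast
    exact mul_inv_cancel₀ hne
  have hMdiag : (1 : Matrix (Fin NRF) (Fin NRF) ℂ) + ((t : ℝ) : ℂ) •
      ((Matrix.diagonal ((Matrix.diagonal (fun j => ((dr j : ℝ) : ℂ))).diag)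
          + ((c : ℝ) : ℂ) • 1)⁻¹ * Matrix.diagonal (fun j => ((dr j : ℝ) : ℂ)))
      = Matrix.diagonal (fun j => ((f j : ℝ) : ℂ)) := by
    have hadd : Matrix.diagonal ((Matrix.diagonal (fun j : Fin NRF => ((dr j : ℝ) : ℂ))).diag)
        + ((c : ℝ) : ℂ) • 1
        = Matrix.diagonal (fun j : Fin NRF => ((dr j : ℝ) : ℂ) + ((c : ℝ) : ℂ)) := by
      rw [Matrix.diag_diagonal, Matrix.smul_one_eq_diagonal, Matrix.diagonal_add]
    rw [hadd, hinv, Matrix.diagonal_mul_diagonal, Matrix.smul_eq_diagonal_mul,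
      Matrix.diagonal_mul_diagonal, ← Matrix.diagonal_one, Matrix.diagonal_add]
    refine congrArg Matrix.diagonal (funext fun j => ?_)

    rw [hf]
    push_cast
    ring
  have hdet : (MI ρ α H Wcv) = Real.logb 2 (∏ j, f j) := by
    simp only [MI]
    rw [← hA, hAdiagonal, hMdiag, Matrix.det_diagonal, ← Complex.ofReal_prod,
      Complex.ofReal_re]
  -- bounds on f
  have hfpos : ∀ j, (1:ℝ) ≤ f j := by
    intro j
    have hdc : (0:ℝ) < dr j + c := by have := hdrnn j; linarith
    have : 0 ≤ t * ((dr j + c)⁻¹ * dr j) :=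
      mul_nonneg ht0.le (mul_nonneg (inv_nonneg.mpr hdc.le) (hdrnn j))
    rw [hf]; dsimp only; linarith
  have hflt : ∀ j, f j < 1 + t := by
    intro j
    have hdc : (0:ℝ) < dr j + c := by have := hdrnn j; linarith
    have hlt1 : (dr j + c)⁻¹ * dr j < 1 := by
      rw [inv_mul_eq_div, div_lt_one hdc]; linarith
    have : t * ((dr j + c)⁻¹ * dr j) < t * 1 := by
      exact mul_lt_mul_of_pos_left hlt1 ht0
    rw [hf]; dsimp only; linarith
  have hfout : ∀ j : Fin NRF, j ∉ s → f j = 1 := by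
    intro j hj
    have hjNu : ¬ (j : ℕ) < Nu := fun h => hj ((hmem j).mpr h)
    rw [hf, hdr]
    simp [hjNu]
  have hprodeq : ∏ j, f j = ∏ j ∈ s, f j :=
    (Finset.prod_subset (Finset.subset_univ s) fun j _ hj => hfout j hj).symm
  have hsne : s.Nonempty := ⟨Fin.castLE h1 ⟨0, hNu⟩, by rw [hmem]; exact hNu⟩
  have hprodlt : ∏ j ∈ s, f j < (1 + t) ^ Nu := by
    calc ∏ j ∈ s, f j < ∏ _j ∈ s, (1 + t) :=
          Finset.prod_lt_prod_of_nonempty (fun j _ => lt_of_lt_of_le one_pos (hfpos j))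
            (fun j _ => hflt j) hsne
      _ = (1 + t) ^ s.card := Finset.prod_const _
      _ = (1 + t) ^ Nu := by rw [hscard]
  have hprodpos : 0 < ∏ j, f j :=
    Finset.prod_pos fun j _ => lt_of_lt_of_le one_pos (hfpos j)
  rw [hdet]
  calc Real.logb 2 (∏ j, f j) < Real.logb 2 ((1 + t) ^ Nu) :=
        Real.logb_lt_logb one_lt_two hprodpos (by rw [hprodeq] at hprodpos ⊢; exact hprodlt)
    _ = Nu * Real.logb 2 (1 + t) := Real.logb_pow 2 (1 + t) Nu
    _ = Nu * Real.logb 2 (1 + α / (1 - α)) := by rw [ht]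
end

section
/- Fix N_u ≥ 1, ρ > 0, and α ∈ (0,1). For each n, let N_r(n) ≥ N_RF(n) ≥ N_u with N_RF(n) → ∞, let H_n ∈ ℂ^{N_r(n)×N_u} be any channel matrix, and let W_cv,n ∈ ℂ^{N_r(n)×N_RF(n)} be a conventional combiner for H_n (orthonormal columns whose first N_u columns are orthonormal eigenvectors of H_n H_n^H for its N_u largest eigenvalues). Then C(W_cv,n) / (N_u log₂ N_RF(n)) → 0 as n → ∞; i.e., the conventional combiner cannot achieve the optimal scaling law N_u log₂ N_RF. -/
/-!
The first `Nu` columns of `Wcv` are eigenvectors `u_k` of `HHᴴ`; since `Σ λ_k = tr(HᴴH) = tr(HHᴴ)`,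
they carry all of `HHᴴ`, i.e. `HHᴴ = Σ λ_k u_k u_kᴴ`. The remaining columns of `Wcv` are orthogonal
to the `u_k`, so `WcvᴴHHᴴWcv` is diagonal with entries `λ_1, …, λ_Nu, 0, …, 0`. The determinant in
`C(Wcv)` then factorises into `Nu` factors `1 + (α/β) λ/(λ + 1/(βρ)) ≤ 1/β`, so `C(Wcv)` stays below
`Nu log₂ (1/β)` while `Nu log₂ NRF → ∞`.
-/

open Matrix BigOperators Filter Topology

namespace Matrix

variable {m n p : Type*} [DecidableEq n]

theorem trace_eq_of_mul_eq_mul {R : Type*} [CommRing R] [Fintype n] {A D V W : Matrix n n R}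
    (hWV : W * V = 1) (hAV : A * V = V * D) : A.trace = D.trace := by
  have hVW : V * W = 1 := mul_eq_one_comm.mp hWV
  calc A.trace = (A * V * W).trace := by rw [Matrix.mul_assoc, hVW, Matrix.mul_one]
    _ = (V * (D * W)).trace := by rw [hAV, Matrix.mul_assoc]
    _ = (D * W * V).trace := trace_mul_comm _ _
    _ = D.trace := by rw [Matrix.mul_assoc, hWV, Matrix.mul_one]

theorem conjTranspose_mul_self_eq_one_of_orthonormal {R : Type*} [Semiring R] [StarRing R]
    [Fintype m] {u : n → m → R} (hu : ∀ k l, star (u k) ⬝ᵥ u l = if k = l then 1 else 0) :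
    (of u)ᵀᴴ * (of u)ᵀ = 1 := by
  ext k l
  simpa [mul_apply, dotProduct, one_apply] using hu k l

theorem mul_eq_mul_diagonal_of_mulVec_eq_smul {R : Type*} [CommSemiring R] [Fintype m]
    [Fintype n] {A : Matrix m m R} {u : n → m → R} {d : n → R} (hu : ∀ k, A *ᵥ u k = d k • u k) :
    A * (of u)ᵀ = (of u)ᵀ * diagonal d := by
  ext i k
  rw [mul_diagonal]
  simpa [mul_apply, mulVec, dotProduct, mul_comm] using congrFun (hu k) i

open scoped ComplexOrder in
theorem mul_conjTranspose_self_eq_of_trace_eq {𝕜 : Type*} [RCLike 𝕜] [Fintype m] [DecidableEq m]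
    [Fintype n] [Fintype p] {H : Matrix m p 𝕜} {U : Matrix m n 𝕜} {D : Matrix n n 𝕜}
    (hU : Uᴴ * U = 1) (hHU : H * Hᴴ * U = U * D) (htr : (Hᴴ * H).trace = D.trace) :
    H * Hᴴ = U * D * Uᴴ := by
  have hP : IsIdempotentElem (U * Uᴴ) := by
    rw [IsIdempotentElem, Matrix.mul_assoc, ← Matrix.mul_assoc Uᴴ, hU, Matrix.one_mul]
  -- `C` is the part of `Hᴴ` orthogonal to the columns of `U`: `tr(CCᴴ) = tr(HᴴH) - tr D = 0`.
  set C := Hᴴ * (1 - U * Uᴴ)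
  have hCC : C * Cᴴ = Hᴴ * (1 - U * Uᴴ) * H := by
    simp only [C, conjTranspose_mul, conjTranspose_conjTranspose, conjTranspose_sub,
      conjTranspose_one]
    rw [Matrix.mul_assoc, ← Matrix.mul_assoc (1 - _), hP.one_sub.eq, Matrix.mul_assoc]
  have htrC : (C * Cᴴ).trace = 0 := by
    rw [hCC, Matrix.mul_sub, Matrix.mul_one, Matrix.sub_mul, trace_sub, htr, trace_mul_comm _ H]
    simp only [← Matrix.mul_assoc, hHU]
    rw [trace_mul_comm, ← Matrix.mul_assoc, hU, Matrix.one_mul, sub_self]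
  have hC : Hᴴ = Hᴴ * (U * Uᴴ) := by
    rw [← sub_eq_zero, ← Matrix.mul_one Hᴴ, Matrix.mul_assoc, ← Matrix.mul_sub, Matrix.one_mul]
    exact trace_mul_conjTranspose_self_eq_zero_iff.mp htrC
  calc H * Hᴴ = H * (Hᴴ * (U * Uᴴ)) := congrArg (H * ·) hC
    _ = U * D * Uᴴ := by simp only [← Matrix.mul_assoc, hHU]

theorem conjTranspose_mul_mul_submatrix_eq_diagonal {R : Type*} [CommSemiring R] [StarRing R]
    [Fintype m] [Fintype n] [Fintype p] [DecidableEq p] {W : Matrix m p R} (hW : Wᴴ * W = 1)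
    {f : n → p} (hf : Function.Injective f) (d : n → R) :
    Wᴴ * (W.submatrix id f * diagonal d * (W.submatrix id f)ᴴ) * W
      = diagonal (Function.extend f d 0) := by
  have hsel : (W.submatrix id f)ᴴ * W = (1 : Matrix p p R).submatrix f id := by
    rw [← hW, conjTranspose_submatrix, submatrix_mul _ _ f id id Function.bijective_id]
    rfl
  have hsel' : Wᴴ * W.submatrix id f = (1 : Matrix p p R).submatrix id f := by
    rw [← hW, submatrix_mul _ _ id id f Function.bijective_id]
    rfl
  simp only [← Matrix.mul_assoc]
  rw [hsel', Matrix.mul_assoc, hsel]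
  ext j j'
  simp only [mul_apply, submatrix_apply, one_apply, diagonal_apply, id]
  by_cases hj : ∃ k, f k = j
  · obtain ⟨k, rfl⟩ := hj
    simp only [hf.eq_iff, hf.extend_apply]
    rw [Fintype.sum_eq_single k fun x hx => by simp [Ne.symm hx]]
    simp
  · rw [Function.extend_apply' _ _ _ hj]
    simp only [not_exists] at hj
    simp [fun k => Ne.symm (hj k)]

end Matrix

noncomputable def streamGain (ρ α x : ℝ) : ℝ :=
  1 + α / (1 - α) * (x / (x + 1 / ((1 - α) * ρ)))

theorem streamGain_zero (ρ α : ℝ) : streamGain ρ α 0 = 1 := by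
  simp [streamGain]

theorem streamGain_mem_Icc {ρ α x : ℝ} (hρ : 0 ≤ ρ) (hα0 : 0 ≤ α) (hα1 : α < 1) (hx : 0 ≤ x) :
    streamGain ρ α x ∈ Set.Icc 1 (1 - α)⁻¹ := by
  have hβ : 0 < 1 - α := sub_pos.mpr hα1
  have he : 0 ≤ 1 / ((1 - α) * ρ) := by positivity
  have hc : 0 ≤ α / (1 - α) := div_nonneg hα0 hβ.le
  have hq : 0 ≤ x / (x + 1 / ((1 - α) * ρ)) := div_nonneg hx (by positivity)
  have hq1 : x / (x + 1 / ((1 - α) * ρ)) ≤ 1 :=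
    div_le_one_of_le₀ (le_add_of_nonneg_right he) (by positivity)
  refine ⟨le_add_of_nonneg_right (mul_nonneg hc hq), ?_⟩
  calc streamGain ρ α x ≤ 1 + α / (1 - α) * 1 := by
        unfold streamGain; gcongr
    _ = (1 - α)⁻¹ := by field_simp; ring

theorem MI_eq_logb_prod_streamGain_of_diagonal {ρ α : ℝ} {Nr Nu NRF : ℕ}
    {H : Matrix (Fin Nr) (Fin Nu) ℂ} {W : Matrix (Fin Nr) (Fin NRF) ℂ} {a : Fin NRF → ℝ}
    (hβρ : 0 < (1 - α) * ρ) (ha : ∀ j, 0 ≤ a j)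
    (hA : Wᴴ * H * Hᴴ * W = diagonal fun j => (a j : ℂ)) :
    MI ρ α H W = Real.logb 2 (∏ j, streamGain ρ α (a j)) := by
  have hpos : ∀ j, 0 < a j + 1 / ((1 - α) * ρ) := fun j =>
    add_pos_of_nonneg_of_pos (ha j) (by positivity)
  have hinv : (diagonal fun j => (a j : ℂ) + ((1 / ((1 - α) * ρ) : ℝ) : ℂ))⁻¹
      = diagonal fun j => (((a j + 1 / ((1 - α) * ρ))⁻¹ : ℝ) : ℂ) := by
    refine inv_eq_left_inv ?_
    rw [diagonal_mul_diagonal, ← diagonal_one]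
    congr 1; funext j
    exact_mod_cast inv_mul_cancel₀ (hpos j).ne'
  have hM : (1 + ((α / (1 - α) : ℝ) : ℂ) • ((diagonal (diagonal fun j => (a j : ℂ)).diag
      + ((1 / ((1 - α) * ρ) : ℝ) : ℂ) • 1)⁻¹ * diagonal fun j => (a j : ℂ)))
      = diagonal fun j => (streamGain ρ α (a j) : ℂ) := by
    rw [diag_diagonal, smul_one_eq_diagonal, diagonal_add, hinv, diagonal_mul_diagonal,
      ← diagonal_smul, ← diagonal_one, diagonal_add]
    congr 1; funext j
    simp only [streamGain, Pi.smul_apply, smul_eq_mul]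
    push_cast
    ring
  simp only [MI, hA, hM, det_diagonal, ← Complex.ofReal_prod, Complex.ofReal_re]

theorem MI_eq_logb_prod_streamGain_of_eigenvectors {ρ α : ℝ} {Nr Nu NRF : ℕ}
    (hβρ : 0 < (1 - α) * ρ) (h1 : Nu ≤ NRF) (H : Matrix (Fin Nr) (Fin Nu) ℂ)
    (lam : Fin Nu → ℝ) (hnn : ∀ k, 0 ≤ lam k) (v : Fin Nu → Fin Nu → ℂ)
    (hv_on : ∀ k l, star (v k) ⬝ᵥ v l = if k = l then 1 else 0)
    (hv_eig : ∀ k, (Hᴴ * H) *ᵥ v k = (lam k : ℂ) • v k)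
    (u : Fin Nu → Fin Nr → ℂ) (hu_eig : ∀ k, (H * Hᴴ) *ᵥ u k = (lam k : ℂ) • u k)
    (W : Matrix (Fin Nr) (Fin NRF) ℂ) (hW : Wᴴ * W = 1)
    (hcols : ∀ (k : Fin Nu) (i : Fin Nr), W i (Fin.castLE h1 k) = u k i) :
    MI ρ α H W = Real.logb 2 (∏ k, streamGain ρ α (lam k)) := by
  have hf := Fin.castLE_injective h1
  have hU : W.submatrix id (Fin.castLE h1) = (of u)ᵀ := by
    ext i k; exact hcols k i
  have hUU : (of u)ᵀᴴ * (of u)ᵀ = 1 := by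
    rw [← hU, conjTranspose_submatrix, ← submatrix_mul _ _ _ id _ Function.bijective_id, hW,
      submatrix_one _ hf]
  have htr := trace_eq_of_mul_eq_mul (conjTranspose_mul_self_eq_one_of_orthonormal hv_on)
    (mul_eq_mul_diagonal_of_mulVec_eq_smul hv_eig)
  have hHH := mul_conjTranspose_self_eq_of_trace_eq hUU
    (mul_eq_mul_diagonal_of_mulVec_eq_smul hu_eig) htr
  have ha : ∀ j, 0 ≤ Function.extend (Fin.castLE h1) lam 0 j := fun j => by
    by_cases hj : ∃ k, Fin.castLE h1 k = j
    · obtain ⟨k, rfl⟩ := hj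
      rw [hf.extend_apply]
      exact hnn k
    · rw [Function.extend_apply' _ _ _ hj]
      rfl
  have hA : Wᴴ * H * Hᴴ * W
      = diagonal fun j => ((Function.extend (Fin.castLE h1) lam 0 j : ℝ) : ℂ) := by
    rw [Matrix.mul_assoc Wᴴ H, hHH, ← hU, conjTranspose_mul_mul_submatrix_eq_diagonal hW hf]
    congr 1; funext j
    rw [Function.apply_extend Complex.ofReal]
    congr 1
  rw [MI_eq_logb_prod_streamGain_of_diagonal hβρ ha hA]
  congr 1
  refine (Fintype.prod_of_injective _ hf _ _ (fun j hj => ?_) fun k => ?_).symm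
  · rw [Function.extend_apply' _ _ _ hj, Pi.zero_apply, streamGain_zero]
  · rw [hf.extend_apply]

theorem logb_prod_streamGain_mem_Icc {ρ α : ℝ} {ι : Type*} [Fintype ι] (hρ : 0 ≤ ρ)
    (hα0 : 0 ≤ α) (hα1 : α < 1) {lam : ι → ℝ} (hnn : ∀ k, 0 ≤ lam k) :
    Real.logb 2 (∏ k, streamGain ρ α (lam k))
      ∈ Set.Icc 0 (Fintype.card ι * Real.logb 2 (1 - α)⁻¹) := by
  have hmem k := streamGain_mem_Icc hρ hα0 hα1 (hnn k)
  have hprod : 1 ≤ ∏ k, streamGain ρ α (lam k) := Finset.one_le_prod fun k _ => (hmem k).1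
  refine ⟨Real.logb_nonneg one_lt_two hprod, ?_⟩
  rw [← Real.logb_pow, ← Finset.card_univ, ← Finset.prod_const]
  exact Real.logb_le_logb_of_le one_lt_two (zero_lt_one.trans_le hprod)
    (Finset.prod_le_prod (fun k _ => zero_le_one.trans (hmem k).1) fun k _ => (hmem k).2)

theorem stmt6_general (ρ α : ℝ) (hρ : 0 < ρ) (hα : α ∈ Set.Ioo (0 : ℝ) 1)
    (Nu : ℕ)
    (Nr NRF : ℕ → ℕ) (h1 : ∀ n, Nu ≤ NRF n)
    (hNRF : Tendsto NRF atTop atTop)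
    (H : ∀ n, Matrix (Fin (Nr n)) (Fin Nu) ℂ)
    -- for each n: the ordered eigenvalues λ₁(n) ≥ ⋯ ≥ λ_{Nu}(n) ≥ 0 of Hₙᴴ Hₙ,
    -- witnessed by an orthonormal eigenbasis v n of Hₙᴴ Hₙ
    (lam : ∀ n, Fin Nu → ℝ) (hnn : ∀ n k, 0 ≤ lam n k)
    (v : ∀ n, Fin Nu → Fin Nu → ℂ)
    (hv_on : ∀ n k l, star (v n k) ⬝ᵥ v n l = if k = l then 1 else 0)
    (hv_eig : ∀ n k, ((H n)ᴴ * H n) *ᵥ v n k = (lam n k : ℂ) • v n k)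
    -- orthonormal vectors u n with Hₙ Hₙᴴ (u n k) = λ_k(n) (u n k)
    (u : ∀ n, Fin Nu → Fin (Nr n) → ℂ)
    (hu_eig : ∀ n k, (H n * (H n)ᴴ) *ᵥ u n k = (lam n k : ℂ) • u n k)
    -- the conventional combiners: orthonormal columns, the first Nu of which
    -- are the eigenvectors of Hₙ Hₙᴴ for its Nu largest eigenvalues
    (Wcv : ∀ n, Matrix (Fin (Nr n)) (Fin (NRF n)) ℂ)
    (hWcv : ∀ n, (Wcv n)ᴴ * Wcv n = 1)
    (hcols : ∀ n (k : Fin Nu) (i : Fin (Nr n)), Wcv n i (Fin.castLE (h1 n) k) = u n k i) :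
    Tendsto (fun n => MI ρ α (H n) (Wcv n) / (Nu * Real.logb 2 (NRF n)))
      atTop (nhds 0) := by
  obtain ⟨hα0, hα1⟩ := hα
  have hK : 0 ≤ Real.logb 2 (1 - α)⁻¹ :=
    Real.logb_nonneg one_lt_two ((one_le_inv₀ (by linarith)).mpr (by linarith))
  have hMI n : MI ρ α (H n) (Wcv n) ∈ Set.Icc 0 (Nu * Real.logb 2 (1 - α)⁻¹) := by
    rw [MI_eq_logb_prod_streamGain_of_eigenvectors (mul_pos (by linarith) hρ) (h1 n) (H n)
      (lam n) (hnn n) (v n) (hv_on n) (hv_eig n) (u n) (hu_eig n) (Wcv n) (hWcv n) (hcols n)]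
    simpa only [Fintype.card_fin] using logb_prod_streamGain_mem_Icc hρ.le hα0.le hα1 (hnn n)
  have hlog : Tendsto (fun n => Real.logb 2 (NRF n)) atTop atTop :=
    (Real.tendsto_logb_atTop one_lt_two).comp (tendsto_natCast_atTop_atTop.comp hNRF)
  refine tendsto_of_tendsto_of_tendsto_of_le_of_le' tendsto_const_nhds
    ((tendsto_const_nhds (x := Real.logb 2 (1 - α)⁻¹)).div_atTop hlog) ?_ ?_
  · filter_upwards [hlog.eventually_gt_atTop 0] with n hn
    exact div_nonneg (hMI n).1 (by positivity)
  · filter_upwards [hlog.eventually_gt_atTop 0] with n hn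
    rw [div_mul_eq_div_div]
    exact div_le_div_of_nonneg_right
      (div_le_of_le_mul₀ (Nat.cast_nonneg _) hK ((hMI n).2.trans_eq (mul_comm _ _))) hn.le

theorem stmt6 (ρ α : ℝ) (hρ : 0 < ρ) (hα : α ∈ Set.Ioo (0 : ℝ) 1)
    (Nu : ℕ) (hNu : 1 ≤ Nu)
    (Nr NRF : ℕ → ℕ) (h1 : ∀ n, Nu ≤ NRF n) (h2 : ∀ n, NRF n ≤ Nr n)
    (hNRF : Tendsto NRF atTop atTop)
    (H : ∀ n, Matrix (Fin (Nr n)) (Fin Nu) ℂ)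
    -- for each n: the ordered eigenvalues λ₁(n) ≥ ⋯ ≥ λ_{Nu}(n) ≥ 0 of Hₙᴴ Hₙ,
    -- witnessed by an orthonormal eigenbasis v n of Hₙᴴ Hₙ
    (lam : ∀ n, Fin Nu → ℝ) (hanti : ∀ n, Antitone (lam n)) (hnn : ∀ n k, 0 ≤ lam n k)
    (v : ∀ n, Fin Nu → Fin Nu → ℂ)
    (hv_on : ∀ n k l, star (v n k) ⬝ᵥ v n l = if k = l then 1 else 0)
    (hv_eig : ∀ n k, ((H n)ᴴ * H n) *ᵥ v n k = (lam n k : ℂ) • v n k)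
    -- orthonormal vectors u n with Hₙ Hₙᴴ (u n k) = λ_k(n) (u n k)
    (u : ∀ n, Fin Nu → Fin (Nr n) → ℂ)
    (hu_on : ∀ n k l, star (u n k) ⬝ᵥ u n l = if k = l then 1 else 0)
    (hu_eig : ∀ n k, (H n * (H n)ᴴ) *ᵥ u n k = (lam n k : ℂ) • u n k)
    -- the conventional combiners: orthonormal columns, the first Nu of which
    -- are the eigenvectors of Hₙ Hₙᴴ for its Nu largest eigenvalues
    (Wcv : ∀ n, Matrix (Fin (Nr n)) (Fin (NRF n)) ℂ)
    (hWcv : ∀ n, (Wcv n)ᴴ * Wcv n = 1)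
    (hcols : ∀ n (k : Fin Nu) (i : Fin (Nr n)), Wcv n i (Fin.castLE (h1 n) k) = u n k i) :
    Tendsto (fun n => MI ρ α (H n) (Wcv n) / (Nu * Real.logb 2 (NRF n)))
      atTop (nhds 0) :=
  stmt6_general ρ α hρ hα Nu Nr NRF h1 hNRF H lam hnn v hv_on hv_eig u hu_eig Wcv hWcv hcols
end

section
/- Let A ∈ ℂ^{N×N} be positive semidefinite Hermitian with rank A = m ≥ 1, let α ∈ (0,1), β = 1 − α, and c > 0, and write a_i = A_{ii} (which are nonnegative reals). Then log₂ det( I_N + (α/β) · (diag{A} + c·I_N)^{-1} · A ) ≤ m · log₂( 1 + (α/(βm)) · Σ_{i=1}^{N} a_i/(a_i + c) ). -/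
/-!
Write `D = diag A + c I` and `t = α / β`. The matrix `D⁻¹ A` is similar to the positive
semidefinite `B = D^{-1/2} A D^{-1/2}`, which has rank `m` and trace `∑ aᵢ / (aᵢ + c)`. Hence
`det (I + t D⁻¹ A) = ∏ (1 + t λᵢ)` over the eigenvalues of `B`, only `m` of which are nonzero,
and AM–GM over those `m` factors bounds the product by `(1 + t tr B / m) ^ m`.
-/

open Matrix BigOperators ComplexOrder

section

open Finset

theorem Real.prod_le_arith_mean_pow {ι : Type*} (s : Finset ι) (f : ι → ℝ)
    (hf : ∀ i ∈ s, 0 ≤ f i) : ∏ i ∈ s, f i ≤ ((∑ i ∈ s, f i) / #s) ^ #s := by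
  rcases s.eq_empty_or_nonempty with rfl | hs
  · simp
  have hcard : (0 : ℝ) < #s := by exact_mod_cast hs.card_pos
  have h := Real.geom_mean_le_arith_mean s (fun _ => 1) f (fun _ _ => zero_le_one)
    (by simpa using hcard) hf
  simp only [Real.rpow_one, sum_const, nsmul_eq_mul, mul_one, one_mul] at h
  rwa [Real.rpow_inv_le_iff_of_pos (prod_nonneg hf)
    (div_nonneg (sum_nonneg hf) hcard.le) hcard, Real.rpow_natCast] at h

theorem Real.prod_one_add_le_pow {ι : Type*} [Fintype ι] (s : Finset ι) (x : ι → ℝ)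
    (hx : ∀ i, 0 ≤ x i) (hs : ∀ i ∉ s, x i = 0) :
    ∏ i, (1 + x i) ≤ (1 + (∑ i, x i) / #s) ^ #s := by
  rcases s.eq_empty_or_nonempty with rfl | hne
  · simp [fun i => hs i (notMem_empty i)]
  have hcard : (#s : ℝ) ≠ 0 := by exact_mod_cast hne.card_pos.ne'
  rw [← prod_subset (subset_univ s) fun i _ hi => by simp [hs i hi],
    ← sum_subset (subset_univ s) fun i _ hi => hs i hi]
  calc ∏ i ∈ s, (1 + x i)
      ≤ ((∑ i ∈ s, (1 + x i)) / #s) ^ #s :=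
        Real.prod_le_arith_mean_pow s _ fun i _ => by linarith [hx i]
    _ = (1 + (∑ i ∈ s, x i) / #s) ^ #s := by
        rw [sum_add_distrib, sum_const, nsmul_one, add_div, div_self hcard]

end

namespace Matrix

variable {𝕜 n : Type*} [RCLike 𝕜] [Fintype n] [DecidableEq n]

theorem IsHermitian.det_one_add_smul {B : Matrix n n 𝕜} (hB : B.IsHermitian) (t : ℝ) :
    det (1 + (t : 𝕜) • B) = ∏ i, ((1 + t * hB.eigenvalues i : ℝ) : 𝕜) := by
  set U := hB.eigenvectorUnitary
  have hconj : 1 + (t : 𝕜) • B = Unitary.conjStarAlgAut 𝕜 _ U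
      (diagonal fun i => ((1 + t * hB.eigenvalues i : ℝ) : 𝕜)) := by
    conv_lhs => rw [hB.spectral_theorem]
    rw [← map_one (Unitary.conjStarAlgAut 𝕜 _ U), ← map_smul, ← map_add]
    congr 1
    ext i j
    rcases eq_or_ne i j with rfl | hij
    · simp
    · simp [hij]
  rw [hconj, Unitary.conjStarAlgAut_apply, det_mul_right_comm,
    mem_unitaryGroup_iff.mp U.2, one_mul, det_diagonal]

theorem PosSemidef.re_det_one_add_smul_le {B : Matrix n n 𝕜} (hB : B.PosSemidef) {t : ℝ}
    (ht : 0 ≤ t) :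
    RCLike.re (det (1 + (t : 𝕜) • B)) ≤ (1 + t * RCLike.re (trace B) / B.rank) ^ B.rank := by
  rw [hB.1.det_one_add_smul, ← RCLike.ofReal_prod, RCLike.ofReal_re,
    hB.1.trace_eq_sum_eigenvalues, ← RCLike.ofReal_sum, RCLike.ofReal_re,
    hB.1.rank_eq_card_non_zero_eigs, Fintype.card_subtype, Finset.mul_sum]
  exact Real.prod_one_add_le_pow _ (fun i => t * hB.1.eigenvalues i)
    (fun i => mul_nonneg ht (hB.eigenvalues_nonneg i)) fun i hi => by simp_all

theorem PosSemidef.re_det_one_add_smul_pos {B : Matrix n n 𝕜} (hB : B.PosSemidef) {t : ℝ}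
    (ht : 0 ≤ t) : 0 < RCLike.re (det (1 + (t : 𝕜) • B)) :=
  have hpos := PosDef.one.add_posSemidef (hB.smul (RCLike.ofReal_nonneg.mpr ht))
  (RCLike.pos_iff.mp hpos.det_pos).1

/-- The witness is `D^{-1/2} A D^{-1/2}` for `D = diagonal d`. -/
theorem PosSemidef.exists_det_one_add_smul_diagonal_inv_mul_eq {A : Matrix n n 𝕜}
    (hA : A.PosSemidef) {d : n → ℝ} (hd : ∀ i, 0 < d i) :
    ∃ B : Matrix n n 𝕜, B.PosSemidef ∧ B.rank = A.rank ∧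
      RCLike.re (trace B) = ∑ i, RCLike.re (A i i) / d i ∧
      ∀ t : 𝕜, det (1 + t • ((diagonal fun i => (d i : 𝕜))⁻¹ * A)) = det (1 + t • B) := by
  set s : n → ℝ := fun i => (√(d i))⁻¹
  have hss : ∀ i, s i * s i = (d i)⁻¹ := fun i => by
    rw [← mul_inv, Real.mul_self_sqrt (hd i).le]
  set S : Matrix n n 𝕜 := diagonal fun i => (s i : 𝕜)
  have hSS : (diagonal fun i => (d i : 𝕜))⁻¹ = S * S := by
    refine inv_eq_left_inv ?_
    rw [diagonal_mul_diagonal, diagonal_mul_diagonal, ← diagonal_one]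
    congr 1
    funext i
    rw [← RCLike.ofReal_mul, ← RCLike.ofReal_mul, hss, inv_mul_cancel₀ (hd i).ne',
      RCLike.ofReal_one]
  have hSunit : IsUnit S.det := by
    rw [det_diagonal]
    exact isUnit_iff_ne_zero.mpr <| Finset.prod_ne_zero_iff.mpr fun i _ => by
      simp [s, Real.sqrt_ne_zero'.mpr (hd i)]
  have hSH : Sᴴ = S := by simp [S, diagonal_conjTranspose]
  have hSAS : (S * A * S).PosSemidef := by
    simpa only [hSH] using hA.conjTranspose_mul_mul_same S
  refine ⟨S * A * S, hSAS, ?_, ?_, fun t => ?_⟩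
  · rw [rank_mul_eq_left_of_isUnit_det S _ hSunit, rank_mul_eq_right_of_isUnit_det S A hSunit]
  · rw [trace, map_sum]
    refine Finset.sum_congr rfl fun i _ => ?_
    rw [diag_apply, mul_diagonal, diagonal_mul, mul_comm, ← mul_assoc, ← RCLike.ofReal_mul,
      hss, RCLike.re_ofReal_mul, inv_mul_eq_div]
  · rw [hSS, mul_assoc, ← mul_smul_comm, det_one_add_mul_comm, smul_mul_assoc]

end Matrix

theorem stmt8_general (N m : ℕ)
    (A : Matrix (Fin N) (Fin N) ℂ) (hA : A.PosSemidef) (hrank : A.rank = m)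
    (α c : ℝ) (hα : α ∈ Set.Ioo (0 : ℝ) 1) (hc : 0 < c) :
    Real.logb 2
        (1 + ((α / (1 - α) : ℝ) : ℂ) •
            ((Matrix.diagonal A.diag + ((c : ℝ) : ℂ) • 1)⁻¹ * A)).det.re ≤
      m * Real.logb 2
        (1 + α / ((1 - α) * m) * ∑ i, (A i i).re / ((A i i).re + c)) := by
  have ht : 0 ≤ α / (1 - α) := div_nonneg hα.1.le (sub_nonneg.mpr hα.2.le)
  have hd : ∀ i, 0 < (A i i).re + c := fun i =>
    add_pos_of_nonneg_of_pos (Complex.nonneg_iff.mp hA.diag_nonneg).1 hc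
  have hD : diagonal A.diag + ((c : ℝ) : ℂ) • 1 =
      diagonal fun i => (((A i i).re + c : ℝ) : ℂ) := by
    rw [smul_one_eq_diagonal, diagonal_add]
    congr 1
    funext i
    rw [diag_apply, Complex.ofReal_add]
    exact congrArg (· + (c : ℂ)) (hA.1.coe_re_apply_self i).symm
  obtain ⟨B, hB, hBrank, hBtrace, hdet⟩ := hA.exists_det_one_add_smul_diagonal_inv_mul_eq hd
  have hmean : α / ((1 - α) * m) * ∑ i, (A i i).re / ((A i i).re + c)
      = α / (1 - α) * RCLike.re (trace B) / B.rank := by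
    rw [hBtrace, hBrank, hrank, mul_comm (1 - α), ← div_div]
    simp only [RCLike.re_to_complex]
    ring
  rw [RCLike.ofReal_eq_complex_ofReal] at hdet
  rw [hD, hdet, hmean, ← hrank, ← hBrank, ← Real.logb_pow]
  exact Real.logb_le_logb_of_le one_lt_two (hB.re_det_one_add_smul_pos ht)
    (hB.re_det_one_add_smul_le ht)

theorem stmt8 (N m : ℕ) (hm : 1 ≤ m)
    (A : Matrix (Fin N) (Fin N) ℂ) (hA : A.PosSemidef) (hrank : A.rank = m)
    (α c : ℝ) (hα : α ∈ Set.Ioo (0 : ℝ) 1) (hc : 0 < c) :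
    Real.logb 2
        (1 + ((α / (1 - α) : ℝ) : ℂ) •
            ((Matrix.diagonal A.diag + ((c : ℝ) : ℂ) • 1)⁻¹ * A)).det.re ≤
      m * Real.logb 2
        (1 + α / ((1 - α) * m) * ∑ i, (A i i).re / ((A i i).re + c)) :=
  stmt8_general N m A hA hrank α c hα hc
end
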